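/- Let A = Λ_R[x_1,…,x_n] ⊗ R[y_1,…,y_n] over a field R of characteristic zero, and let W : A → A be multiplication by Σ_{i=1}^n x_i y_i. Then W² = 0, and as an R-module ker(W)/im(W) ≅ R[y]/(y_1,…,y_n): every W-closed element is congruent modulo im(W) to an element of the form f·x_1 x_2 ⋯ x_n with f ∈ R, and f·x_1⋯x_n ∈ im(W) only if f = 0. In particular ker(W)/im(W) is one-dimensional over R, generated by the class of x_1⋯x_n. -/

import Mathlib

/-!
We model `A = Λ_R[x_1,…,x_n] ⊗ R[y_1,…,y_n]` over a field `R` of characteristic zero as the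
free `R`-module on the monomial basis `Finset (Fin n) × (Fin n →₀ ℕ)`, a basis element
`(S, k)` representing the monomial `x_S ⊗ y^k` (indices of `S` in increasing order).
`Wmul` is multiplication by `ω = ∑ i, x_i y_i`.  The statement: `W² = 0`, every `W`-closed
element is congruent modulo `im W` to `c • x_1⋯x_n` (the basis element `(univ, 0)`) for some
`c ∈ R`, and `c • x_1⋯x_n ∈ im W` only if `c = 0`; so `ker W / im W` is one-dimensional,
generated by the class of `x_1⋯x_n`.
-/

set_option linter.unusedSectionVars false
set_option linter.unusedVariables false

noncomputable section

variable (R : Type*) [Field R] [CharZero R] (n : ℕ)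

/-- monomial basis of `Λ[x] ⊗ R[y]` -/
abbrev SWBasis := Finset (Fin n) × (Fin n →₀ ℕ)

/-- the underlying module of `Λ_R[x] ⊗ R[y]` -/
abbrev SWForms := SWBasis n →₀ R

/-- the Koszul sign `(-1)^{#{j ∈ S | j < i}}` -/
def insSign (i : Fin n) (S : Finset (Fin n)) : R :=
  (-1) ^ (S.filter (· < i)).card

/-- extend a map defined on basis monomials to a linear endomorphism -/
def ofBasis (f : SWBasis n → SWForms R n) : SWForms R n →ₗ[R] SWForms R n :=
  Finsupp.lsum ℕ fun b => LinearMap.smulRight (LinearMap.id : R →ₗ[R] R) (f b)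

/-- multiplication by the odd symplectic element `ω = ∑ i, x_i y_i` -/
def Wmul : SWForms R n →ₗ[R] SWForms R n :=
  ofBasis R n fun b => ∑ i ∈ b.1ᶜ,
    insSign R n i b.1 •
      Finsupp.single (insert i b.1, b.2 + Finsupp.single i 1) (1 : R)

/-- the top exterior monomial `x_1 x_2 ⋯ x_n` -/
def topX : SWForms R n := Finsupp.single (Finset.univ, 0) 1

/-! ### Auxiliary lemmas -/

lemma ofBasis_single (f : SWBasis n → SWForms R n) (b : SWBasis n) (c : R) :
    ofBasis R n f (Finsupp.single b c) = c • f b := by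
  rw [ofBasis, Finsupp.lsum_apply, Finsupp.sum_single_index]
  · rfl
  · simp

lemma insSign_sq (i : Fin n) (S : Finset (Fin n)) :
    insSign R n i S * insSign R n i S = 1 := by
  rw [insSign, ← pow_add]
  exact Even.neg_one_pow ⟨_, rfl⟩

lemma filter_lt_erase (i : Fin n) (S : Finset (Fin n)) :
    (S.erase i).filter (· < i) = S.filter (· < i) := by
  ext a
  simp only [Finset.mem_filter, Finset.mem_erase]
  constructor
  · rintro ⟨⟨_, h⟩, h2⟩; exact ⟨h, h2⟩
  · rintro ⟨h, h2⟩; exact ⟨⟨ne_of_lt h2, h⟩, h2⟩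

lemma insSign_erase_self (i : Fin n) (S : Finset (Fin n)) :
    insSign R n i (S.erase i) = insSign R n i S := by
  rw [insSign, insSign, filter_lt_erase]

lemma insSign_insert_self (i : Fin n) (S : Finset (Fin n)) :
    insSign R n i (insert i S) = insSign R n i S := by
  rw [insSign, insSign, Finset.filter_insert, if_neg (lt_irrefl i)]

lemma insSign_insert {i j : Fin n} {S : Finset (Fin n)} (hne : j ≠ i) (hj : j ∉ S) :
    insSign R n i (insert j S) = (if j < i then -1 else 1) * insSign R n i S := by
  rw [insSign, insSign, Finset.filter_insert]
  by_cases h : j < i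
  · rw [if_pos h, if_pos h,
      Finset.card_insert_of_notMem (fun hm => hj (Finset.mem_filter.mp hm).1), pow_succ]
    ring
  · rw [if_neg h, if_neg h, one_mul]

lemma insSign_mul_swap_notmem {i j : Fin n} {S : Finset (Fin n)}
    (hi : i ∉ S) (hj : j ∉ S) (hij : i ≠ j) :
    insSign R n i S * insSign R n j (insert i S)
      = -(insSign R n j S * insSign R n i (insert j S)) := by
  rw [insSign_insert R n hij hi, insSign_insert R n hij.symm hj]
  rcases hij.lt_or_gt with h | h
  · rw [if_pos h, if_neg (asymm h)]; ring
  · rw [if_neg (asymm h), if_pos h]; ring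

lemma insSign_mul_swap_mem {i j : Fin n} {S : Finset (Fin n)}
    (hi : i ∉ S) (hj : j ∈ S) :
    insSign R n i S * insSign R n j (insert i S)
      = -(insSign R n j S * insSign R n i (S.erase j)) := by
  have hij : i ≠ j := fun h => hi (h ▸ hj)
  have h1 : insSign R n j (insert i S) = (if i < j then -1 else 1) * insSign R n j S :=
    insSign_insert R n hij hi
  have h2 : insSign R n i S = (if j < i then -1 else 1) * insSign R n i (S.erase j) := by
    conv_lhs => rw [← Finset.insert_erase hj]
    exact insSign_insert R n hij.symm (Finset.notMem_erase j S)
  rw [h1, h2]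
  rcases hij.lt_or_gt with h | h
  · rw [if_pos h, if_neg (asymm h)]; ring
  · rw [if_neg (asymm h), if_pos h]; ring

lemma sub_single_add_single {k : Fin n →₀ ℕ} {i j : Fin n} (hij : i ≠ j) :
    (k + Finsupp.single i 1) - Finsupp.single j 1
      = (k - Finsupp.single j 1) + Finsupp.single i 1 := by
  ext a
  simp only [Finsupp.add_apply, Finsupp.tsub_apply, Finsupp.single_apply]
  split_ifs with h1 h2
  · exact absurd (h1.trans h2.symm) hij
  all_goals omega

lemma add_single_apply_ne {k : Fin n →₀ ℕ} {i j : Fin n} (hij : i ≠ j) :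
    (k + Finsupp.single i 1 : Fin n →₀ ℕ) j = k j := by
  simp [Finsupp.add_apply, Finsupp.single_apply, hij]

/-- the contraction homotopy on basis monomials -/
def hfun (b : SWBasis n) : SWForms R n :=
  ∑ i ∈ b.1, ((b.2 i : R) * insSign R n i b.1) •
    Finsupp.single (b.1.erase i, b.2 - Finsupp.single i 1) (1 : R)

def hmul : SWForms R n →ₗ[R] SWForms R n := ofBasis R n (hfun R n)

def wfun (b : SWBasis n) : SWForms R n :=
  ∑ i ∈ b.1ᶜ, insSign R n i b.1 •
    Finsupp.single (insert i b.1, b.2 + Finsupp.single i 1) (1 : R)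

lemma Wmul_single (b : SWBasis n) (c : R) :
    Wmul R n (Finsupp.single b c) = c • wfun R n b :=
  ofBasis_single R n _ b c

lemma hmul_single (b : SWBasis n) (c : R) :
    hmul R n (Finsupp.single b c) = c • hfun R n b :=
  ofBasis_single R n _ b c

/-! ### `W² = 0` on basis elements -/

lemma WW_single (S : Finset (Fin n)) (k : Fin n →₀ ℕ) :
    Wmul R n (Wmul R n (Finsupp.single (S, k) (1 : R))) = 0 := by
  rw [Wmul_single, one_smul, wfun, map_sum]
  have step : ∀ i ∈ Sᶜ,
      Wmul R n (insSign R n i S •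
        Finsupp.single (insert i S, k + Finsupp.single i 1) (1 : R))
      = ∑ j ∈ Sᶜ.erase i, (insSign R n i S * insSign R n j (insert i S)) •
          Finsupp.single (insert j (insert i S),
            (k + Finsupp.single i 1) + Finsupp.single j 1) (1 : R) := by
    intro i _
    rw [map_smul, Wmul_single, one_smul, wfun, Finset.smul_sum]
    simp only
    rw [Finset.compl_insert]
    exact Finset.sum_congr rfl fun j _ => smul_smul _ _ _
  rw [Finset.sum_congr rfl step]
  set F : Fin n → Fin n → SWForms R n := fun i j =>
    (insSign R n i S * insSign R n j (insert i S)) •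
      Finsupp.single (insert j (insert i S),
        (k + Finsupp.single i 1) + Finsupp.single j 1) (1 : R) with hF
  have hswap : ∑ i ∈ Sᶜ, ∑ j ∈ Sᶜ.erase i, F i j = ∑ i ∈ Sᶜ, ∑ j ∈ Sᶜ.erase i, F j i := by
    rw [Finset.sum_comm' (t' := Sᶜ) (s' := fun j => Sᶜ.erase j)
      (fun x y => by simp only [Finset.mem_erase, Finset.mem_compl]; tauto)]
  have hanti : ∀ i ∈ Sᶜ, ∀ j ∈ Sᶜ.erase i, F j i = -F i j := by
    intro i hi j hj
    rw [Finset.mem_erase] at hj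
    rw [Finset.mem_compl] at hi
    obtain ⟨hji, hj⟩ := hj
    rw [Finset.mem_compl] at hj
    rw [hF]
    simp only
    rw [Finset.insert_comm, add_right_comm,
      insSign_mul_swap_notmem R n hj hi hji, neg_smul]
  have heq : ∑ i ∈ Sᶜ, ∑ j ∈ Sᶜ.erase i, F i j = -∑ i ∈ Sᶜ, ∑ j ∈ Sᶜ.erase i, F i j := by
    conv_lhs => rw [hswap]
    rw [← Finset.sum_neg_distrib]
    exact Finset.sum_congr rfl fun i hi => by
      rw [← Finset.sum_neg_distrib]
      exact Finset.sum_congr rfl fun j hj => hanti i hi j hj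
  have h2 : (2 : R) • ∑ i ∈ Sᶜ, ∑ j ∈ Sᶜ.erase i, F i j = 0 := by
    rw [two_smul]
    nth_rewrite 2 [heq]
    exact add_neg_cancel _
  rcases smul_eq_zero.mp h2 with h | h
  · exact absurd h two_ne_zero
  · exact h

/-! ### the homotopy identity -/

lemma expand_hW {S : Finset (Fin n)} {k : Fin n →₀ ℕ} {i : Fin n} (hi : i ∉ S) :
    hmul R n (Finsupp.single (insert i S, k + Finsupp.single i 1) (1 : R))
      = (((k i : R) + 1) * insSign R n i S) • Finsupp.single (S, k) (1 : R)
        + ∑ j ∈ S, ((k j : R) * insSign R n j (insert i S)) •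
            Finsupp.single (insert i (S.erase j),
              (k - Finsupp.single j 1) + Finsupp.single i 1) (1 : R) := by
  rw [hmul_single, one_smul, hfun]
  simp only
  rw [Finset.sum_insert hi]
  congr 1
  · rw [Finset.erase_insert hi, add_tsub_cancel_right, insSign_insert_self]
    congr 2
    rw [Finsupp.add_apply, Finsupp.single_eq_same]
    push_cast
    ring
  · apply Finset.sum_congr rfl
    intro j hj
    have hij : i ≠ j := fun h => hi (h ▸ hj)
    rw [Finset.erase_insert_of_ne hij, sub_single_add_single n hij,
      add_single_apply_ne n hij]

lemma expand_Wh {S : Finset (Fin n)} {k : Fin n →₀ ℕ} {i : Fin n} (hi : i ∈ S) :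
    Wmul R n (Finsupp.single (S.erase i, k - Finsupp.single i 1) (1 : R))
      = insSign R n i S •
          Finsupp.single (S, (k - Finsupp.single i 1) + Finsupp.single i 1) (1 : R)
        + ∑ j ∈ Sᶜ, insSign R n j (S.erase i) •
            Finsupp.single (insert j (S.erase i),
              (k - Finsupp.single i 1) + Finsupp.single j 1) (1 : R) := by
  rw [Wmul_single, one_smul, wfun]
  simp only
  rw [Finset.compl_erase, Finset.sum_insert (by simp [hi])]
  congr 1
  rw [Finset.insert_erase hi, insSign_erase_self]

lemma homotopy (S : Finset (Fin n)) (k : Fin n →₀ ℕ) :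
    hmul R n (Wmul R n (Finsupp.single (S, k) 1))
      + Wmul R n (hmul R n (Finsupp.single (S, k) 1))
      = ((n - S.card + k.sum fun _ v => v : ℕ) : R) • Finsupp.single (S, k) 1 := by
  have hWfull : hmul R n (Wmul R n (Finsupp.single (S, k) 1))
      = (∑ i ∈ Sᶜ, ((k i : R) + 1)) • Finsupp.single (S, k) (1 : R)
        + ∑ i ∈ Sᶜ, ∑ j ∈ S,
            (insSign R n i S * ((k j : R) * insSign R n j (insert i S))) •
              Finsupp.single (insert i (S.erase j),
                (k - Finsupp.single j 1) + Finsupp.single i 1) (1 : R) := by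
    rw [Wmul_single, one_smul, wfun, map_sum]
    simp only
    have step : ∀ i ∈ Sᶜ,
        hmul R n (insSign R n i S •
          Finsupp.single (insert i S, k + Finsupp.single i 1) (1 : R))
        = ((k i : R) + 1) • Finsupp.single (S, k) (1 : R)
          + ∑ j ∈ S, (insSign R n i S * ((k j : R) * insSign R n j (insert i S))) •
              Finsupp.single (insert i (S.erase j),
                (k - Finsupp.single j 1) + Finsupp.single i 1) (1 : R) := by
      intro i hi
      rw [Finset.mem_compl] at hi
      rw [map_smul, expand_hW R n hi, smul_add, Finset.smul_sum]
      congr 1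
      · rw [smul_smul]
        congr 1
        have : insSign R n i S * (((k i : R) + 1) * insSign R n i S)
            = ((k i : R) + 1) * (insSign R n i S * insSign R n i S) := by ring
        rw [this, insSign_sq, mul_one]
      · exact Finset.sum_congr rfl fun j _ => smul_smul _ _ _
    rw [Finset.sum_congr rfl step, Finset.sum_add_distrib, ← Finset.sum_smul]
  have hWhfull : Wmul R n (hmul R n (Finsupp.single (S, k) 1))
      = (∑ i ∈ S, (k i : R)) • Finsupp.single (S, k) (1 : R)
        + ∑ i ∈ S, ∑ j ∈ Sᶜ,
            (((k i : R) * insSign R n i S) * insSign R n j (S.erase i)) •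
              Finsupp.single (insert j (S.erase i),
                (k - Finsupp.single i 1) + Finsupp.single j 1) (1 : R) := by
    rw [hmul_single, one_smul, hfun, map_sum]
    simp only
    have step : ∀ i ∈ S,
        Wmul R n (((k i : R) * insSign R n i S) •
          Finsupp.single (S.erase i, k - Finsupp.single i 1) (1 : R))
        = (k i : R) • Finsupp.single (S, k) (1 : R)
          + ∑ j ∈ Sᶜ, (((k i : R) * insSign R n i S) * insSign R n j (S.erase i)) •
              Finsupp.single (insert j (S.erase i),
                (k - Finsupp.single i 1) + Finsupp.single j 1) (1 : R) := by
      intro i hi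
      rw [map_smul, expand_Wh R n hi, smul_add, Finset.smul_sum]
      congr 1
      · rcases Nat.eq_zero_or_pos (k i) with h0 | hpos
        · simp [h0]
        · have hk : (k - Finsupp.single i 1) + Finsupp.single i 1 = k :=
            tsub_add_cancel_of_le (Finsupp.single_le_iff.mpr hpos)
          rw [hk, smul_smul]
          congr 1
          have : (k i : R) * insSign R n i S * insSign R n i S
              = (k i : R) * (insSign R n i S * insSign R n i S) := by ring
          rw [this, insSign_sq, mul_one]
      · exact Finset.sum_congr rfl fun j _ => smul_smul _ _ _
    rw [Finset.sum_congr rfl step, Finset.sum_add_distrib, ← Finset.sum_smul]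
  rw [hWfull, hWhfull]
  -- cross terms cancel
  have hcross : (∑ i ∈ Sᶜ, ∑ j ∈ S,
        (insSign R n i S * ((k j : R) * insSign R n j (insert i S))) •
          Finsupp.single (insert i (S.erase j),
            (k - Finsupp.single j 1) + Finsupp.single i 1) (1 : R))
      + ∑ i ∈ S, ∑ j ∈ Sᶜ,
          (((k i : R) * insSign R n i S) * insSign R n j (S.erase i)) •
            Finsupp.single (insert j (S.erase i),
              (k - Finsupp.single i 1) + Finsupp.single j 1) (1 : R) = 0 := by
    rw [Finset.sum_comm (s := S) (t := Sᶜ), ← Finset.sum_add_distrib]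
    apply Finset.sum_eq_zero
    intro i hi
    rw [← Finset.sum_add_distrib]
    apply Finset.sum_eq_zero
    intro j hj
    rw [Finset.mem_compl] at hi
    rw [← add_smul]
    convert zero_smul R _
    have hswap := insSign_mul_swap_mem R n hi hj
    have : insSign R n i S * ((k j : R) * insSign R n j (insert i S))
        = (k j : R) * (insSign R n i S * insSign R n j (insert i S)) := by ring
    rw [this, hswap]
    ring
  -- now combine
  rw [add_add_add_comm, hcross, add_zero, ← add_smul]
  congr 1
  have hnat : (∑ i ∈ Sᶜ, (k i + 1)) + ∑ i ∈ S, k i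
      = (n - S.card) + k.sum (fun _ v => v) := by
    rw [Finsupp.sum_fintype _ _ fun _ => rfl, Finset.sum_add_distrib, Finset.sum_const,
      smul_eq_mul, mul_one, Finset.card_compl, Fintype.card_fin,
      ← Finset.sum_add_sum_compl S (fun i => k i)]
    generalize (∑ i ∈ Sᶜ, k i) = a
    generalize (∑ i ∈ S, k i) = b
    generalize (n - S.card) = m
    ring
  calc (∑ i ∈ Sᶜ, ((k i : R) + 1)) + ∑ i ∈ S, (k i : R)
      = (((∑ i ∈ Sᶜ, (k i + 1)) + ∑ i ∈ S, k i : ℕ) : R) := by push_cast; ring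
    _ = _ := by rw [hnat]

/-! ### the degree `λ = (n - |S|) + |k|` -/

def lam (b : SWBasis n) : ℕ := (n - b.1.card) + b.2.sum fun _ v => v

lemma lam_eq_zero_iff (b : SWBasis n) :
    lam n b = 0 ↔ b = (Finset.univ, 0) := by
  constructor
  · intro h
    rw [lam, Nat.add_eq_zero] at h
    obtain ⟨h1, h2⟩ := h
    have hle : b.1.card ≤ n := by simpa using Finset.card_le_univ b.1
    have hS : b.1 = Finset.univ := by
      apply Finset.eq_univ_of_card
      rw [Fintype.card_fin]
      omega
    have hk : b.2 = 0 := by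
      rw [Finsupp.sum_fintype _ _ fun _ => rfl] at h2
      ext a
      exact Finset.sum_eq_zero_iff.mp h2 a (Finset.mem_univ a)
    exact Prod.ext hS hk
  · rintro rfl
    simp [lam]

lemma lam_W {S : Finset (Fin n)} {k : Fin n →₀ ℕ} {i : Fin n} (hi : i ∉ S) :
    lam n (insert i S, k + Finsupp.single i 1) = lam n (S, k) := by
  have hcard : S.card < n := by
    have hne : S ≠ Finset.univ := by
      intro h; rw [h] at hi; exact hi (Finset.mem_univ i)
    have := Finset.card_lt_card (Finset.ssubset_univ_iff.mpr hne)
    simpa using this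
  have hsum : (k + Finsupp.single i 1).sum (fun _ v => v)
      = k.sum (fun _ v => v) + 1 := by
    rw [Finsupp.sum_fintype _ _ fun _ => rfl, Finsupp.sum_fintype _ _ fun _ => rfl]
    simp only [Finsupp.add_apply]
    rw [Finset.sum_add_distrib]
    congr 1
    simp [Finsupp.single_apply]
  rw [lam, lam]
  simp only
  rw [Finset.card_insert_of_notMem hi, hsum]
  omega

/-- the normalized contraction: `(1/λ) h` away from the harmonic line -/
def gfun (b : SWBasis n) : SWForms R n :=
  if lam n b = 0 then 0 else ((lam n b : R)⁻¹) • hfun R n b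

def gmul : SWForms R n →ₗ[R] SWForms R n := ofBasis R n (gfun R n)

lemma key (b : SWBasis n) :
    Wmul R n (gmul R n (Finsupp.single b 1)) + gmul R n (Wmul R n (Finsupp.single b 1))
      = Finsupp.single b 1 - (if b = (Finset.univ, 0) then Finsupp.single b (1 : R) else 0) := by
  by_cases hb : lam n b = 0
  · have hb' : b = (Finset.univ, 0) := (lam_eq_zero_iff n b).mp hb
    rw [if_pos hb', sub_self]
    have h1 : gmul R n (Finsupp.single b 1) = 0 := by
      rw [gmul, ofBasis_single, one_smul, gfun, if_pos hb]
    have h2 : Wmul R n (Finsupp.single b 1) = 0 := by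
      rw [Wmul_single, one_smul, wfun, hb']
      simp
    rw [h1, h2, map_zero, map_zero, add_zero]
  · have hb' : b ≠ (Finset.univ, 0) := fun h => hb ((lam_eq_zero_iff n b).mpr h)
    rw [if_neg hb', sub_zero]
    obtain ⟨S, k⟩ := b
    have h1 : gmul R n (Finsupp.single (S, k) (1:R))
        = ((lam n (S, k) : R)⁻¹) • hmul R n (Finsupp.single (S, k) 1) := by
      rw [gmul, ofBasis_single, one_smul, gfun, if_neg hb, hmul_single, one_smul]
    have h2 : gmul R n (Wmul R n (Finsupp.single (S, k) (1:R)))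
        = ((lam n (S, k) : R)⁻¹) • hmul R n (Wmul R n (Finsupp.single (S, k) 1)) := by
      rw [Wmul_single, one_smul, wfun, map_sum, map_sum, Finset.smul_sum]
      apply Finset.sum_congr rfl
      intro i hi
      rw [Finset.mem_compl] at hi
      rw [map_smul, map_smul, gmul, ofBasis_single, one_smul, gfun,
        if_neg (by rw [lam_W n hi]; exact hb), lam_W n hi,
        hmul_single, one_smul, smul_smul, smul_smul, mul_comm]
    rw [h1, h2, map_smul, ← smul_add, add_comm, homotopy]
    have hl : ((n - S.card + k.sum fun _ v => v : ℕ) : R) = (lam n (S, k) : R) := rfl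
    rw [hl, smul_smul, inv_mul_cancel₀ (Nat.cast_ne_zero.mpr hb), one_smul]

lemma Wmul_apply_top (u : SWForms R n) :
    (Wmul R n u) (Finset.univ, (0 : Fin n →₀ ℕ)) = 0 := by
  rw [Wmul, ofBasis, Finsupp.lsum_apply, Finsupp.sum_apply, Finsupp.sum]
  apply Finset.sum_eq_zero
  intro b _
  simp only [LinearMap.smulRight_apply, LinearMap.id_apply, Finsupp.smul_apply,
    Finset.sum_apply']
  convert smul_zero _
  apply Finset.sum_eq_zero
  intro i _
  rw [Finsupp.single_apply, if_neg, smul_zero]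
  intro h
  have h2 : b.2 + Finsupp.single i 1 = 0 := congrArg Prod.snd h
  have := congrArg (fun m => m i) h2
  simp [Finsupp.add_apply] at this

theorem cohomology_of_omega_superforms :
    (Wmul R n).comp (Wmul R n) = 0
    ∧ (∀ v : SWForms R n, Wmul R n v = 0 →
        ∃ (c : R) (u : SWForms R n), v = c • topX R n + Wmul R n u)
    ∧ (∀ (c : R) (u : SWForms R n), c • topX R n = Wmul R n u → c = 0) := by
  refine ⟨?_, ?_, ?_⟩
  · apply Finsupp.lhom_ext
    intro b c
    have hc : (Finsupp.single b c : SWForms R n) = c • Finsupp.single b 1 := by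
      rw [Finsupp.smul_single, smul_eq_mul, mul_one]
    rw [hc, map_smul, map_smul, LinearMap.comp_apply]
    obtain ⟨S, k⟩ := b
    rw [WW_single, smul_zero]
    simp
  · intro v hv
    refine ⟨v (Finset.univ, 0), gmul R n v, ?_⟩
    -- the linear map identity
    set Φ : SWForms R n →ₗ[R] SWForms R n :=
      LinearMap.smulRight (Finsupp.lapply (Finset.univ, 0)) (topX R n) with hΦ
    have Tid : (Wmul R n).comp (gmul R n) + (gmul R n).comp (Wmul R n) + Φ
        = LinearMap.id := by
      apply Finsupp.lhom_ext
      intro b c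
      have hc : (Finsupp.single b c : SWForms R n) = c • Finsupp.single b 1 := by
        rw [Finsupp.smul_single, smul_eq_mul, mul_one]
      rw [hc, map_smul, map_smul]
      congr 1
      rw [LinearMap.add_apply, LinearMap.add_apply, LinearMap.comp_apply,
        LinearMap.comp_apply, LinearMap.id_apply]
      have hΦb : Φ (Finsupp.single b 1)
          = if b = (Finset.univ, 0) then Finsupp.single b (1 : R) else 0 := by
        rw [hΦ, LinearMap.smulRight_apply, Finsupp.lapply_apply, Finsupp.single_apply]
        by_cases hb : b = (Finset.univ, 0)
        · rw [if_pos hb, if_pos hb, one_smul, hb, topX]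
        · rw [if_neg hb, if_neg hb, zero_smul]
      rw [hΦb, key R n b]
      abel
    have := congrArg (fun T : SWForms R n →ₗ[R] SWForms R n => T v) Tid
    simp only [LinearMap.add_apply, LinearMap.comp_apply, LinearMap.id_apply] at this
    rw [hv, map_zero, add_zero] at this
    conv_lhs => rw [← this]
    rw [hΦ, LinearMap.smulRight_apply, Finsupp.lapply_apply]
    abel
  · intro c u h
    have := congrArg (fun w : SWForms R n => w (Finset.univ, 0)) h
    rw [Wmul_apply_top, Finsupp.smul_apply, topX, Finsupp.single_eq_same,
      smul_eq_mul, mul_one] at this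
    exact this

end
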